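/- arXiv:2512.20361 — 4 statements merged into one kernel-verified Lean document; each statement's English description precedes it below -/
import Mathlib

section
/- Let a ∈ ℂ with Im a > 0 and η ∈ ℂ. Suppose f is continuous on {z ∈ ℂ : Im z ≥ 0} ∖ {a}, holomorphic on ℍ ∖ {a}, real-valued at every point of ℝ, the difference f(z) − conj(η)/(π·(z − a)) is bounded on some punctured neighborhood of a, and f(z) → 0 as |z| → ∞ within {Im z ≥ 0}. Then f(z) = conj(η)/(π·(z − a)) + η/(π·(z − conj(a))) for every z ≠ a with Im z ≥ 0. -/
/-!
The difference `g` between `f` and the explicit solution is bounded near `a`, hence extends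
holomorphically across `a`; it is real on `ℝ` and tends to `0` at infinity. The maximum modulus
principle for `exp (∓ I g)` on large half-discs shows `Im g = 0` on the upper half-plane, so `g` is
constant there by the open mapping theorem, and the decay forces the constant to be `0`.
-/

open Complex Set Filter Metric Function Bornology Asymptotics ComplexConjugate
open scoped Topology

theorem isBoundedUnder_nhdsNE_of_forall_norm_sub_lt {E : Type*} [SeminormedAddCommGroup E]
    {u : E → ℝ} {a : E} (h : ∃ C ε : ℝ, 0 < ε ∧ ∀ z, z ≠ a → ‖z - a‖ < ε → u z ≤ C) :
    IsBoundedUnder (· ≤ ·) (𝓝[≠] a) u := by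
  obtain ⟨C, ε, hε, hC⟩ := h
  refine isBoundedUnder_of_eventually_le (a := C) (eventually_nhdsWithin_iff.2 ?_)
  filter_upwards [ball_mem_nhds a hε] with z hz hza
  exact hC z hza (by rwa [mem_ball, dist_eq_norm] at hz)

theorem tendsto_cobounded_inf_principal_of_forall_norm_le {E F : Type*} [SeminormedAddCommGroup E]
    [SeminormedAddCommGroup F] {f : E → F} {p : E → Prop}
    (h : ∀ ε : ℝ, 0 < ε → ∃ R : ℝ, ∀ z, p z → R ≤ ‖z‖ → ‖f z‖ ≤ ε) :
    Tendsto f (cobounded E ⊓ 𝓟 {z | p z}) (𝓝 0) := by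
  refine Metric.tendsto_nhds.2 fun ε hε => ?_
  obtain ⟨R, hR⟩ := h (ε / 2) (half_pos hε)
  rw [eventually_inf_principal]
  filter_upwards [tendsto_norm_cobounded_atTop.eventually_ge_atTop R] with z hz hpz
  rw [dist_zero_right]
  exact (hR z hpz hz).trans_lt (half_lt_self hε)

theorem interior_setOf_im_eq (c : ℝ) : interior {z : ℂ | z.im = c} = ∅ := by
  have : {z : ℂ | z.im = c} = {z | z.im ≤ c} ∩ {z | c ≤ z.im} := by
    ext; simp [le_antisymm_iff]
  rw [this, interior_inter, interior_setOfPred_im_le, interior_setOfPred_le_im]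
  exact eq_empty_of_forall_notMem fun z hz => lt_asymm (α := ℝ) hz.1 hz.2

theorem DifferentiableOn.exists_const_of_forall_im_eq_zero {G : ℂ → ℂ} {U : Set ℂ}
    (hG : DifferentiableOn ℂ G U) (hU : IsOpen U) (hUc : IsPreconnected U)
    (him : ∀ z ∈ U, (G z).im = 0) : ∃ c, ∀ z ∈ U, G z = c := by
  obtain rfl | ⟨z, hz⟩ := U.eq_empty_or_nonempty
  · exact ⟨0, by simp⟩
  refine ((hG.analyticOnNhd hU).is_constant_or_isOpen hUc).resolve_right fun hopen => ?_
  have : G '' U ⊆ interior {w : ℂ | w.im = 0} :=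
    (hopen U subset_rfl hU).subset_interior_iff.2 (image_subset_iff.2 him)
  rw [interior_setOf_im_eq] at this
  exact this (mem_image_of_mem G hz)

/-- Maximum modulus principle for `exp (-I * G)`, whose modulus is `exp (Im G)`. -/
theorem im_le_of_forall_mem_frontier_im_le {U : Set ℂ} (hU : IsBounded U) {G : ℂ → ℂ}
    (hG : DiffContOnCl ℂ G U) {c : ℝ} (hc : ∀ z ∈ frontier U, (G z).im ≤ c) {z : ℂ}
    (hz : z ∈ closure U) : (G z).im ≤ c := by
  have hnorm (w : ℂ) : ‖exp (-I * G w)‖ = Real.exp (G w).im := by simp [norm_exp]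
  have hexp : DiffContOnCl ℂ (fun w => exp (-I * G w)) U :=
    differentiable_exp.comp_diffContOnCl (hG.const_smul (-I))
  have := norm_le_of_forall_mem_frontier_norm_le hU hexp (C := Real.exp c)
    (fun w hw => by simpa only [hnorm, Real.exp_le_exp] using hc w hw) hz
  simpa only [hnorm, Real.exp_le_exp] using this

theorem im_nonpos_of_forall_mem_frontier_of_tendsto_zero {U : Set ℂ} {G : ℂ → ℂ}
    (hG : DiffContOnCl ℂ G U) (hfr : ∀ z ∈ frontier U, (G z).im ≤ 0)
    (hdec : Tendsto G (cobounded ℂ ⊓ 𝓟 U) (𝓝 0)) {z : ℂ} (hz : z ∈ closure U) :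
    (G z).im ≤ 0 := by
  refine le_of_forall_pos_le_add fun ε hε => ?_
  have hev : ∀ᶠ w in cobounded ℂ ⊓ 𝓟 U, (G w).im < ε :=
    ((continuous_im.tendsto 0).comp hdec).eventually (eventually_lt_nhds (by simpa using hε))
  obtain ⟨R, -, hR⟩ :=
    (hasBasis_cobounded_compl_closedBall (0 : ℂ)).eventually_iff.1 (eventually_inf_principal.1 hev)
  set R' := max R ‖z‖ + 1
  have hzD : z ∈ closure (U ∩ ball 0 R') := by
    have hzR : z ∈ ball 0 R' := by
      rw [mem_ball_zero_iff]; linarith [le_max_right R ‖z‖]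
    rw [inter_comm]
    exact isOpen_ball.inter_closure ⟨hzR, hz⟩
  refine (im_le_of_forall_mem_frontier_im_le (isBounded_ball.subset inter_subset_right)
    (hG.mono inter_subset_left) (fun w hw => ?_) hzD).trans (zero_add ε).ge
  rcases frontier_inter_subset U (ball 0 R') hw with ⟨hwU, -⟩ | ⟨hwU, hwR⟩
  · exact (hfr w hwU).trans hε.le
  by_cases hw : w ∈ U
  · have : ‖w‖ = R' := by simpa using frontier_ball_subset_sphere hwR
    refine (hR ?_ hw).le
    simp only [mem_compl_iff, mem_closedBall, dist_zero_right, not_le]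
    linarith [le_max_left R ‖z‖]
  · exact (hfr w ⟨hwU, fun h => hw (interior_subset h)⟩).trans hε.le

theorem eqOn_zero_of_real_boundary_values {G : ℂ → ℂ} (hd : DifferentiableOn ℂ G {z | 0 < z.im})
    (hc : ContinuousOn G {z | 0 ≤ z.im}) (hreal : ∀ x : ℝ, (G x).im = 0)
    (hdec : Tendsto G (cobounded ℂ ⊓ 𝓟 {z | 0 < z.im}) (𝓝 0)) :
    EqOn G 0 {z | 0 ≤ z.im} := by
  have hcl : closure {z : ℂ | 0 < z.im} = {z | 0 ≤ z.im} := closure_setOfPred_lt_im 0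
  have hG : DiffContOnCl ℂ G {z | 0 < z.im} := ⟨hd, hcl ▸ hc⟩
  have hfr : ∀ z ∈ frontier {z : ℂ | 0 < z.im}, (G z).im = 0 := by
    intro z hz
    rw [frontier_setOfPred_lt_im] at hz
    have hz' : (z.re : ℂ) = z := Complex.ext (by simp) (by simpa using (hz : z.im = 0).symm)
    rw [← hz']
    exact hreal z.re
  have him : ∀ z ∈ {z : ℂ | 0 < z.im}, (G z).im = 0 := by
    intro z hz
    have hle := im_nonpos_of_forall_mem_frontier_of_tendsto_zero hG
      (fun w hw => (hfr w hw).le) hdec (subset_closure hz)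
    have hge := im_nonpos_of_forall_mem_frontier_of_tendsto_zero hG.neg
      (fun w hw => by simp [hfr w hw]) (by simpa only [neg_zero, Pi.neg_def] using hdec.neg)
      (subset_closure hz)
    simp only [Pi.neg_apply, neg_im, neg_nonpos] at hge
    exact le_antisymm hle hge
  obtain ⟨c, hGc⟩ := hd.exists_const_of_forall_im_eq_zero
    (isOpen_lt continuous_const continuous_im) (convex_halfSpace_im_gt 0).isPreconnected him
  have hc0 : c = 0 := by
    have hI : Tendsto (fun t : ℝ => (t : ℂ) * I) atTop (cobounded ℂ ⊓ 𝓟 {z | 0 < z.im}) :=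
      tendsto_inf.2 ⟨tendsto_norm_atTop_iff_cobounded.1 (by simpa using tendsto_abs_atTop_atTop),
        tendsto_principal.2 (by simpa using eventually_gt_atTop (0 : ℝ))⟩
    refine tendsto_nhds_unique (tendsto_const_nhds.congr' ?_) (hdec.comp hI)
    filter_upwards [eventually_gt_atTop 0] with t ht
    exact (hGc _ (by simpa using ht)).symm
  subst hc0
  exact EqOn.of_subset_closure hGc hc continuousOn_const (fun z (hz : 0 < z.im) => hz.le) hcl.ge

theorem eqOn_zero_of_real_boundary_values_of_isBoundedUnder {g : ℂ → ℂ} {a : ℂ} (ha : 0 < a.im)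
    (hd : ∀ z : ℂ, 0 < z.im → z ≠ a → DifferentiableAt ℂ g z)
    (hc : ContinuousOn g ({z | 0 ≤ z.im} \ {a}))
    (hb : IsBoundedUnder (· ≤ ·) (𝓝[≠] a) fun z => ‖g z‖) (hreal : ∀ x : ℝ, (g x).im = 0)
    (hdec : Tendsto g (cobounded ℂ ⊓ 𝓟 {z | 0 < z.im}) (𝓝 0)) :
    EqOn g 0 ({z | 0 ≤ z.im} \ {a}) := by
  set G := update g a (limUnder (𝓝[≠] a) g)
  have hGg : EqOn G g {a}ᶜ := fun z hz => update_of_ne hz _ _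
  have hU : {z : ℂ | 0 < z.im} ∈ 𝓝 a := (isOpen_lt continuous_const continuous_im).mem_nhds ha
  have hGd : DifferentiableOn ℂ G {z | 0 < z.im} :=
    differentiableOn_update_limUnder_of_isLittleO hU
      (fun z hz => (hd z hz.1 hz.2).differentiableWithinAt)
      ((isBigO_one_iff ℂ).1
        ((hb.isBigO_one ℂ).sub (isBigO_const_one ℂ (g a) _))).isLittleO_sub_self_inv
  have hGc : ContinuousOn G {z | 0 ≤ z.im} := by
    intro z hz
    rcases eq_or_ne z a with rfl | hza
    · exact (hGd.differentiableAt hU).continuousAt.continuousWithinAt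
    · exact continuousWithinAt_sdiff_singleton.1
        ((hc z ⟨hz, hza⟩).congr (fun w hw => hGg hw.2) (hGg hza))
  have hGreal (x : ℝ) : (G x).im = 0 := by
    rw [hGg (ne_of_apply_ne im (by simpa using ha.ne))]
    exact hreal x
  have hGdec : Tendsto G (cobounded ℂ ⊓ 𝓟 {z | 0 < z.im}) (𝓝 0) :=
    hdec.congr' <| ((eventually_ne_cobounded a).filter_mono inf_le_left).mono fun z hz =>
      (hGg hz).symm
  intro z hz
  rw [← hGg hz.2]
  exact eqOn_zero_of_real_boundary_values hGd hGc hGreal hGdec hz.1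

/-- The pole `conj η / (π (z - a))` plus its mirror image under `z ↦ conj z`, which makes the sum
real on `ℝ`. -/
noncomputable def halfPlaneFermion (a η z : ℂ) : ℂ :=
  conj η / (Real.pi * (z - a)) + η / (Real.pi * (z - conj a))

theorem halfPlaneFermion_im_ofReal (a η : ℂ) (x : ℝ) : (halfPlaneFermion a η x).im = 0 := by
  have : η / (Real.pi * (x - conj a)) = conj (conj η / (Real.pi * (x - a))) := by
    simp [map_div₀]
  rw [halfPlaneFermion, this, add_conj]
  simp

theorem differentiableAt_halfPlaneFermion {a η z : ℂ} (hza : z ≠ a) (hza' : z ≠ conj a) :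
    DifferentiableAt ℂ (halfPlaneFermion a η) z := by
  unfold halfPlaneFermion
  fun_prop (disch := simp [sub_eq_zero, hza, hza', Real.pi_ne_zero])

theorem tendsto_halfPlaneFermion_cobounded (a η : ℂ) :
    Tendsto (halfPlaneFermion a η) (cobounded ℂ) (𝓝 0) := by
  have hpole (c b : ℂ) : Tendsto (fun z : ℂ => c / (Real.pi * (z - b))) (cobounded ℂ) (𝓝 0) := by
    have := (tendsto_inv₀_cobounded.comp (tendsto_sub_const_cobounded b)).const_mul (c / Real.pi)
    rw [mul_zero] at this
    exact this.congr fun z => by rw [comp_apply, div_mul_eq_div_div, div_eq_mul_inv (c / _)]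
  have := (hpole (conj η) a).add (hpole η (conj a))
  rw [add_zero] at this
  exact this

theorem isBoundedUnder_norm_sub_halfPlaneFermion {a η : ℂ} (ha : a ≠ conj a) {f : ℂ → ℂ}
    (hf : IsBoundedUnder (· ≤ ·) (𝓝[≠] a) fun z => ‖f z - conj η / (Real.pi * (z - a))‖) :
    IsBoundedUnder (· ≤ ·) (𝓝[≠] a) fun z => ‖f z - halfPlaneFermion a η z‖ := by
  have hcont : ContinuousAt (fun z : ℂ => η / (Real.pi * (z - conj a))) a := by
    fun_prop (disch := simp [sub_eq_zero, ha, Real.pi_ne_zero])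
  simpa [halfPlaneFermion, sub_add_eq_sub_sub] using
    (isBigO_one_iff ℂ).1
      ((hf.isBigO_one ℂ).sub ((hcont.tendsto.mono_left nhdsWithin_le_nhds).isBigO_one ℂ))

/-- Uniqueness for the half-plane Riemann–Hilbert boundary value problem:
a function continuous on the closed upper half-plane off `a`, holomorphic on
`ℍ ∖ {a}`, real on `ℝ`, with prescribed singularity `conj(η)/(π(z−a))` at `a`
(up to a bounded error) and decaying at infinity, must equal
`conj(η)/(π(z−a)) + η/(π(z−conj a))`. -/
theorem halfPlane_fermion_uniqueness (a η : ℂ) (ha : 0 < a.im) (f : ℂ → ℂ)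
    (hcont : ContinuousOn f ({z : ℂ | 0 ≤ z.im} \ {a}))
    (hholo : ∀ z : ℂ, 0 < z.im → z ≠ a → DifferentiableAt ℂ f z)
    (hreal : ∀ x : ℝ, (f x).im = 0)
    (hbdd : ∃ C ε : ℝ, 0 < ε ∧ ∀ z : ℂ, z ≠ a → ‖z - a‖ < ε →
      ‖f z - (starRingEnd ℂ) η / (↑Real.pi * (z - a))‖ ≤ C)
    (hdecay : ∀ ε : ℝ, 0 < ε → ∃ R : ℝ, ∀ z : ℂ, 0 ≤ z.im → R ≤ ‖z‖ →
      ‖f z‖ ≤ ε) :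
    ∀ z : ℂ, 0 ≤ z.im → z ≠ a →
      f z = (starRingEnd ℂ) η / (↑Real.pi * (z - a)) +
        η / (↑Real.pi * (z - (starRingEnd ℂ) a)) := by
  have hconj (z : ℂ) (hz : 0 ≤ z.im) : z ≠ conj a := fun h => by
    have := congrArg im h
    simp only [conj_im] at this
    linarith
  have hS (z : ℂ) (hz : 0 ≤ z.im) (hza : z ≠ a) : DifferentiableAt ℂ (halfPlaneFermion a η) z :=
    differentiableAt_halfPlaneFermion hza (hconj z hz)
  have hf_dec : Tendsto f (cobounded ℂ ⊓ 𝓟 {z | 0 < z.im}) (𝓝 0) :=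
    tendsto_cobounded_inf_principal_of_forall_norm_le fun ε hε =>
      (hdecay ε hε).imp fun _ hR z hz => hR z hz.le
  have hzero := eqOn_zero_of_real_boundary_values_of_isBoundedUnder
    (g := fun z => f z - halfPlaneFermion a η z) ha
    (fun z hz hza => (hholo z hz hza).sub (hS z hz.le hza))
    (hcont.sub fun z hz => (hS z hz.1 hz.2).continuousAt.continuousWithinAt)
    (isBoundedUnder_norm_sub_halfPlaneFermion (hconj a ha.le)
      (isBoundedUnder_nhdsNE_of_forall_norm_sub_lt hbdd))
    (fun x => by simp only [sub_im, hreal x, halfPlaneFermion_im_ofReal, sub_zero])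
    (by simpa only [sub_zero] using
      hf_dec.sub ((tendsto_halfPlaneFermion_cobounded a η).mono_left inf_le_left))
  intro z hz hza
  exact sub_eq_zero.1 (hzero ⟨hz, hza⟩)
end

section
/- Let u : ℂ ∖ {0} → ℝ be harmonic in the sense that every point z₀ ≠ 0 has an open neighborhood U ⊆ ℂ ∖ {0} and a holomorphic function g on U with u = Re g on U. Suppose there is a constant C > 0 with |u(z)| ≤ C·(1 + |log|z||) for all z ≠ 0. Then there exist real constants α and β such that u(z) = α·log|z| + β for all z ≠ 0. -/
/-!
Pulled back along `exp`, `v = u ∘ exp` is harmonic on all of `ℂ`, hence the real part of an entire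
function `G`, and `Re G z ≤ C (1 + ‖z‖)`. Borel–Carathéodory turns this one-sided bound into
`‖G z‖ = O(1 + ‖z‖)`; the Cauchy estimate then bounds `G'`, and Liouville makes `G` affine,
`G z = G 0 + a z`. Since `v` is `2πi`-periodic, `a` is real, and
`u z = v (log z) = a log ‖z‖ + Re (G 0)`.
-/

open Complex Metric Set Filter InnerProductSpace

namespace Complex

variable {F : Type*} [NormedAddCommGroup F] [NormedSpace ℂ F] {f : ℂ → F} {A B : ℝ}

theorem norm_deriv_le_of_norm_le_add_mul_norm (hf : Differentiable ℂ f) (hB : 0 ≤ B)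
    (hfAB : ∀ z, ‖f z‖ ≤ A + B * ‖z‖) (c : ℂ) : ‖deriv f c‖ ≤ A + 2 * B := by
  have hA : 0 ≤ A := by simpa using (norm_nonneg _).trans (hfAB 0)
  set R := ‖c‖ + 1
  have hR : 1 ≤ R := le_add_of_nonneg_left (norm_nonneg c)
  calc ‖deriv f c‖ ≤ (A + B * (2 * R)) / R := by
        refine norm_deriv_le_of_forall_mem_sphere_norm_le (by positivity) hf.diffContOnCl
          fun z hz => (hfAB z).trans ?_
        have := norm_le_of_mem_closedBall (sphere_subset_closedBall hz)
        gcongr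
        linarith
    _ = A / R + 2 * B := by field_simp
    _ ≤ A + 2 * B := by gcongr; exact div_le_self hA hR

theorem eq_add_smul_deriv_of_norm_le_add_mul_norm [CompleteSpace F] (hf : Differentiable ℂ f)
    (hB : 0 ≤ B) (hfAB : ∀ z, ‖f z‖ ≤ A + B * ‖z‖) (z : ℂ) : f z = f 0 + z • deriv f 0 := by
  have hbdd : Bornology.IsBounded (range (deriv f)) :=
    isBounded_iff_forall_norm_le.2 ⟨A + 2 * B, by
      rintro _ ⟨c, rfl⟩; exact norm_deriv_le_of_norm_le_add_mul_norm hf hB hfAB c⟩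
  have hderiv : ∀ w, HasDerivAt (fun w => f w - w • deriv f 0) 0 w := fun w => by
    convert (hf w).hasDerivAt.sub ((hasDerivAt_id' w).smul_const (deriv f 0)) using 1
    · rfl
    rw [one_smul, hf.deriv.apply_eq_apply_of_bounded hbdd w 0, sub_self]
  have := is_const_of_deriv_eq_zero (fun w => (hderiv w).differentiableAt)
    (fun w => (hderiv w).deriv) z 0
  simpa [sub_eq_iff_eq_add] using this

variable {G : ℂ → ℂ}

theorem norm_le_of_re_le_add_mul_norm (hG : Differentiable ℂ G) (hA : 0 < A) (hB : 0 ≤ B)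
    (hre : ∀ z, (G z).re ≤ A + B * ‖z‖) (z : ℂ) :
    ‖G z‖ ≤ 2 * (A + B) + 3 * ‖G 0‖ + 4 * B * ‖z‖ := by
  set R := 2 * ‖z‖ + 1
  have hz : z ∈ ball 0 R := by rw [mem_ball_zero_iff]; linarith [norm_nonneg z]
  have hmaps : MapsTo G (ball 0 R) {w | w.re ≤ A + B * R} := fun w hw =>
    (hre w).trans (by gcongr; exact (mem_ball_zero_iff.1 hw).le)
  have hBC := borelCaratheodory (by positivity) hG.differentiableOn hmaps (by positivity) hz
  have hRz : R - ‖z‖ = ‖z‖ + 1 := by ring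
  rw [hRz] at hBC
  have h1 : 2 * (A + B * R) * ‖z‖ / (‖z‖ + 1) ≤ 2 * (A + B * R) := by
    rw [div_le_iff₀ (by positivity)]; nlinarith [norm_nonneg z]
  have h2 : ‖G 0‖ * (R + ‖z‖) / (‖z‖ + 1) ≤ 3 * ‖G 0‖ := by
    rw [div_le_iff₀ (by positivity)]; nlinarith [norm_nonneg z, norm_nonneg (G 0)]
  linarith

theorem eq_add_mul_deriv_of_re_le_add_mul_norm (hG : Differentiable ℂ G) (hA : 0 < A)
    (hB : 0 ≤ B) (hre : ∀ z, (G z).re ≤ A + B * ‖z‖) (z : ℂ) : G z = G 0 + z * deriv G 0 :=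
  eq_add_smul_deriv_of_norm_le_add_mul_norm hG (by positivity)
    (norm_le_of_re_le_add_mul_norm hG hA hB hre) z

end Complex

theorem InnerProductSpace.harmonicAt_of_eqOn_re {u : ℂ → ℝ} {g : ℂ → ℂ} {U : Set ℂ} {z : ℂ}
    (hU : IsOpen U) (hz : z ∈ U) (hg : DifferentiableOn ℂ g U)
    (hu : EqOn u (fun w => (g w).re) U) : HarmonicAt u z :=
  (harmonicAt_congr_nhds (eventually_of_mem (hU.mem_nhds hz) hu)).2
    (hg.analyticAt (hU.mem_nhds hz)).harmonicAt_re

/-- A real function harmonic on the punctured plane (locally the real part of a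
holomorphic function) growing at most logarithmically near `0` and near
infinity is of the form `α·log|z| + β`. -/
theorem punctured_plane_log_growth (u : ℂ → ℝ)
    (hharm : ∀ z₀ : ℂ, z₀ ≠ 0 → ∃ U : Set ℂ, IsOpen U ∧ z₀ ∈ U ∧ U ⊆ {(0 : ℂ)}ᶜ ∧
      ∃ g : ℂ → ℂ, DifferentiableOn ℂ g U ∧ ∀ z ∈ U, u z = (g z).re)
    (C : ℝ) (hC : 0 < C)
    (hgrowth : ∀ z : ℂ, z ≠ 0 → |u z| ≤ C * (1 + |Real.log ‖z‖|)) :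
    ∃ α β : ℝ, ∀ z : ℂ, z ≠ 0 → u z = α * Real.log ‖z‖ + β := by
  have hv : HarmonicOnNhd (u ∘ exp) univ := fun z₀ _ => by
    obtain ⟨U, hU, hz₀, -, g, hg, hug⟩ := hharm (exp z₀) (exp_ne_zero z₀)
    exact harmonicAt_of_eqOn_re (hU.preimage continuous_exp) hz₀
      (hg.comp differentiable_exp.differentiableOn (mapsTo_preimage _ _)) fun z hz => hug _ hz
  obtain ⟨G, hGan, hGre⟩ := hv.exists_analyticOnNhd_univ_re_eq
  have hG : Differentiable ℂ G := fun z => (hGan z (mem_univ z)).differentiableAt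
  have hGu : ∀ z, (G z).re = u (exp z) := congrFun hGre
  have hGaff : ∀ z, G z = G 0 + z * deriv G 0 :=
    eq_add_mul_deriv_of_re_le_add_mul_norm hG hC hC.le fun z => by
      calc (G z).re ≤ |u (exp z)| := (hGu z).trans_le (le_abs_self _)
        _ ≤ C * (1 + |z.re|) := by simpa [norm_exp] using hgrowth _ (exp_ne_zero z)
        _ ≤ C + C * ‖z‖ := by nlinarith [abs_re_le_norm z]
  set a := deriv G 0
  have hu : ∀ z, u (exp z) = (G 0).re + (z * a).re := fun z => by rw [← hGu, hGaff z, add_re]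
  have ha : a.im = 0 := by
    have := hu (2 * Real.pi * I)
    rw [exp_two_pi_mul_I, ← exp_zero, hu 0] at this
    simpa [Real.pi_ne_zero] using this
  refine ⟨a.re, (G 0).re, fun z hz => ?_⟩
  obtain ⟨w, rfl⟩ : ∃ w, exp w = z := ⟨log z, exp_log hz⟩
  rw [hu, mul_re, ha, norm_exp, Real.log_exp]
  ring
end

section
/- Let H : ℂ → ℂ be an entire function and C > 0 a constant such that |Re H(z)| ≤ C·(1 + log(1 + |z|)) for all z ∈ ℂ. Then H is constant. -/
/-!
By the Borel–Carathéodory theorem on the disc of radius `2‖z‖`, the logarithmic bound on `Re H`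
gives `‖H z‖ = O(log ‖z‖)`. The Cauchy estimate for `H'(c)` on circles of radius
`R → ∞` about `c` is then `o(R) / R → 0`, so `H' = 0`.
-/

open Complex Filter Asymptotics Metric Bornology

theorem Differentiable.apply_eq_apply_of_isLittleO_id {F : Type*} [NormedAddCommGroup F]
    [NormedSpace ℂ F] {f : ℂ → F} (hf : Differentiable ℂ f) (hgrowth : f =o[cobounded ℂ] id)
    (z w : ℂ) : f z = f w := by
  refine is_const_of_deriv_eq_zero hf (fun c => ?_) z w
  refine norm_le_zero_iff.1 (le_of_forall_gt_imp_ge_of_dense fun ε hε => ?_)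
  obtain ⟨R₀, -, hR₀⟩ :=
    Filter.hasBasis_cobounded_norm.eventually_iff.1 (hgrowth.def (half_pos hε))
  set R := max R₀ 0 + 2 * ‖c‖ + 1
  have hR : 0 < R := by positivity
  have hsphere : ∀ z ∈ sphere c R, ‖f z‖ ≤ ε * R := by
    intro z hz
    have hzc : ‖z - c‖ = R := by rwa [mem_sphere_iff_norm] at hz
    have hlow : R₀ ≤ ‖z‖ := by
      linarith [norm_sub_le z c, le_max_left R₀ 0, norm_nonneg c]
    have hup : ‖z‖ ≤ 2 * R := by
      linarith [norm_le_norm_add_norm_sub' z c, le_max_right R₀ 0]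
    calc ‖f z‖ ≤ ε / 2 * ‖z‖ := hR₀ hlow
      _ ≤ ε / 2 * (2 * R) := by gcongr
      _ = ε * R := by ring
  calc ‖_root_.deriv f c‖ ≤ ε * R / R :=
        norm_deriv_le_of_forall_mem_sphere_norm_le hR hf.diffContOnCl hsphere
    _ = ε := mul_div_cancel_right₀ ε hR.ne'

theorem Complex.borelCaratheodory_of_norm_le_half {f : ℂ → ℂ} {M r : ℝ} {z : ℂ} (hM : 0 < M)
    (hf : DifferentiableOn ℂ f (ball 0 (2 * r)))
    (hre : Set.MapsTo f (ball 0 (2 * r)) {w | w.re ≤ M}) (hr : 0 < r) (hz : ‖z‖ ≤ r) :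
    ‖f z‖ ≤ 2 * M + 3 * ‖f 0‖ := by
  have hzR : ‖z‖ < 2 * r := by linarith
  have hbc := borelCaratheodory hM hf hre (by positivity) (mem_ball_zero_iff.2 hzR)
  have h₁ : ‖z‖ / (2 * r - ‖z‖) ≤ 1 := by
    rw [div_le_one (by linarith)]; linarith
  have h₃ : (2 * r + ‖z‖) / (2 * r - ‖z‖) ≤ 3 := by
    rw [div_le_iff₀ (by linarith)]; linarith
  calc ‖f z‖ ≤ 2 * M * (‖z‖ / (2 * r - ‖z‖)) + ‖f 0‖ * ((2 * r + ‖z‖) / (2 * r - ‖z‖)) := by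
        simpa only [mul_div_assoc] using hbc
    _ ≤ 2 * M * 1 + ‖f 0‖ * 3 := by gcongr
    _ = 2 * M + 3 * ‖f 0‖ := by ring

theorem Differentiable.norm_le_of_re_le_log {f : ℂ → ℂ} (hf : Differentiable ℂ f) {C : ℝ}
    (hC : 0 < C) (hre : ∀ z, (f z).re ≤ C * (1 + Real.log (1 + ‖z‖))) {z : ℂ} (hz : z ≠ 0) :
    ‖f z‖ ≤ 2 * C + 3 * ‖f 0‖ + 2 * C * Real.log (1 + 2 * ‖z‖) := by
  have hlog : 0 ≤ Real.log (1 + 2 * ‖z‖) := Real.log_nonneg (by linarith [norm_nonneg z])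
  have hball : Set.MapsTo f (ball 0 (2 * ‖z‖))
      {w | w.re ≤ C * (1 + Real.log (1 + 2 * ‖z‖))} := by
    intro w hw
    have hw' : ‖w‖ < 2 * ‖z‖ := mem_ball_zero_iff.1 hw
    calc (f w).re ≤ C * (1 + Real.log (1 + ‖w‖)) := hre w
      _ ≤ C * (1 + Real.log (1 + 2 * ‖z‖)) := by gcongr
  have := borelCaratheodory_of_norm_le_half (by positivity) hf.differentiableOn hball
    (norm_pos_iff.2 hz) le_rfl
  linarith

theorem isLittleO_log_one_add_mul_norm_id {E : Type*} [NormedAddCommGroup E] {k : ℝ}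
    (hk : 0 < k) : (fun x : E => Real.log (1 + k * ‖x‖)) =o[cobounded E] id := by
  have hlin : Tendsto (fun r : ℝ => 1 + k * r) atTop atTop :=
    tendsto_atTop_add_const_left _ _ (tendsto_id.const_mul_atTop hk)
  have hO : (fun r : ℝ => 1 + k * r) =O[atTop] id :=
    (isLittleO_const_id_atTop 1).isBigO.add ((isBigO_refl _ _).const_mul_left k)
  have hreal : (fun r : ℝ => Real.log (1 + k * r)) =o[atTop] id :=
    (Real.isLittleO_log_id_atTop.comp_tendsto hlin).trans_isBigO hO
  exact isLittleO_norm_right.1 (hreal.comp_tendsto tendsto_norm_cobounded_atTop)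

/-- Borel–Carathéodory-type Liouville theorem: an entire function whose real
part grows at most logarithmically is constant. -/
theorem entire_log_re_constant (H : ℂ → ℂ) (hH : Differentiable ℂ H)
    (C : ℝ) (hC : 0 < C)
    (hgrowth : ∀ z : ℂ, |(H z).re| ≤ C * (1 + Real.log (1 + ‖z‖))) :
    ∀ z : ℂ, H z = H 0 := by
  set B : ℂ → ℝ := fun z => 2 * C + 3 * ‖H 0‖ + 2 * C * Real.log (1 + 2 * ‖z‖)
  have hHB : H =O[cobounded ℂ] B := IsBigO.of_bound 1 <| by
    filter_upwards [eventually_ne_cobounded 0] with z hz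
    rw [one_mul, Real.norm_eq_abs]
    exact (hH.norm_le_of_re_le_log hC (fun w => (le_abs_self _).trans (hgrowth w)) hz).trans
      (le_abs_self _)
  have hB : B =o[cobounded ℂ] id :=
    (isLittleO_const_id_cobounded _).add
      ((isLittleO_log_one_add_mul_norm_id two_pos).const_mul_left _)
  exact fun z => hH.apply_eq_apply_of_isLittleO_id (hHB.trans_isLittleO hB) z 0
end

section
/- Let κ ∈ (0,1) and p, q, t ∈ ℂ with p·q = t² and |q| ≤ |t|. Suppose that for every ω ∈ ℂ with |ω| = 1 one has 2·|Re(t·ω)| ≤ κ·|p·ω + conj(q·ω)|. Then |t| ≤ κ⁻¹·(1 − √(1 − κ²))·|p|. In particular, since κ⁻¹(1 − √(1 − κ²)) < 1 for κ < 1, if p ≠ 0 then |t/p| is bounded by a constant strictly less than 1 depending only on κ. -/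
open Complex

/-!
Testing the Lipschitz condition in the unit direction `ω` with `t ω = |t|` gives
`2|t| ≤ κ (|p| + |q|)`. Since `|p| |q| = |t|²` and `|q| ≤ |t| ≤ |p|`, this is the quadratic
inequality `κ |t|² - 2 |p| |t| + κ |p|² ≥ 0`, which pins `|t|` below the smaller root
`κ⁻¹ (1 - √(1 - κ²)) |p|`.
-/

theorem Complex.exists_norm_eq_one_mul_eq_norm (t : ℂ) : ∃ ω : ℂ, ‖ω‖ = 1 ∧ t * ω = ‖t‖ := by
  refine ⟨exp (-(arg t : ℂ) * I), by simpa using norm_exp_ofReal_mul_I (-arg t), ?_⟩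
  nth_rewrite 1 [← norm_mul_exp_arg_mul_I t]
  rw [mul_assoc, ← exp_add, neg_mul, add_neg_cancel, exp_zero, mul_one]

theorem Complex.two_mul_norm_le_of_forall_norm_eq_one {κ : ℝ} (hκ : 0 ≤ κ) {p q t : ℂ}
    (h : ∀ ω : ℂ, ‖ω‖ = 1 → 2 * |(t * ω).re| ≤ κ * ‖p * ω + (starRingEnd ℂ) (q * ω)‖) :
    2 * ‖t‖ ≤ κ * (‖p‖ + ‖q‖) := by
  obtain ⟨ω, hω, htω⟩ := exists_norm_eq_one_mul_eq_norm t
  calc 2 * ‖t‖ = 2 * |(t * ω).re| := by rw [htω, ofReal_re, abs_norm]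
    _ ≤ κ * ‖p * ω + (starRingEnd ℂ) (q * ω)‖ := h ω hω
    _ ≤ κ * (‖p‖ + ‖q‖) := by
      gcongr
      refine (norm_add_le _ _).trans_eq ?_
      rw [norm_conj, norm_mul, norm_mul, hω, mul_one, mul_one]

theorem le_of_mul_eq_sq_of_le {P Q T : ℝ} (hP : 0 ≤ P) (h : P * Q = T ^ 2)
    (hQT : Q ≤ T) : T ≤ P := by
  nlinarith

theorem le_inv_mul_one_sub_sqrt_one_sub_sq_mul {κ P Q T : ℝ} (hκ0 : 0 < κ) (hκ1 : κ ≤ 1)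
    (hP : 0 ≤ P) (hTP : T ≤ P) (h : P * Q = T ^ 2) (hκ : 2 * T ≤ κ * (P + Q)) :
    T ≤ κ⁻¹ * (1 - √(1 - κ ^ 2)) * P := by
  have hquad : 2 * T * P ≤ κ * (P ^ 2 + T ^ 2) := by nlinarith
  have hsq : (√(1 - κ ^ 2) * P) ^ 2 ≤ (P - κ * T) ^ 2 := by
    rw [mul_pow, Real.sq_sqrt (by nlinarith)]
    nlinarith
  have hroot : √(1 - κ ^ 2) * P ≤ P - κ * T :=
    le_of_pow_le_pow_left₀ two_ne_zero (by nlinarith) hsq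
  rw [mul_assoc, le_inv_mul_iff₀ hκ0]
  linarith

theorem inv_mul_one_sub_sqrt_one_sub_sq_lt_one {κ : ℝ} (hκ0 : 0 < κ) (hκ1 : κ < 1) :
    κ⁻¹ * (1 - √(1 - κ ^ 2)) < 1 := by
  have hsqrt : 1 - κ < √(1 - κ ^ 2) :=
    Real.lt_sqrt_of_sq_lt (by nlinarith)
  rw [inv_mul_lt_iff₀ hκ0]
  linarith

/-- Pointwise bound on the Beltrami coefficient of the conformal
parametrization of a space-like surface: if `p·q = t²`, `|q| ≤ |t|`, and in
every unit direction `ω` one has `2|Re(t·ω)| ≤ κ·|p·ω + conj(q·ω)|`, then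
`|t| ≤ κ⁻¹(1 − √(1 − κ²))·|p|`, a constant strictly less than `1` times `|p|`. -/
theorem beltrami_coefficient_bound (κ : ℝ) (hκ0 : 0 < κ) (hκ1 : κ < 1)
    (p q t : ℂ) (hconf : p * q = t ^ 2) (hqt : ‖q‖ ≤ ‖t‖)
    (hlip : ∀ ω : ℂ, ‖ω‖ = 1 →
      2 * |(t * ω).re| ≤ κ * ‖p * ω + (starRingEnd ℂ) (q * ω)‖) :
    ‖t‖ ≤ κ⁻¹ * (1 - Real.sqrt (1 - κ ^ 2)) * ‖p‖ ∧
    κ⁻¹ * (1 - Real.sqrt (1 - κ ^ 2)) < 1 := by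
  have hPQ : ‖p‖ * ‖q‖ = ‖t‖ ^ 2 := by rw [← norm_mul, hconf, norm_pow]
  have hTP : ‖t‖ ≤ ‖p‖ := le_of_mul_eq_sq_of_le (norm_nonneg p) hPQ hqt
  have h2T : 2 * ‖t‖ ≤ κ * (‖p‖ + ‖q‖) := two_mul_norm_le_of_forall_norm_eq_one hκ0.le hlip
  exact ⟨le_inv_mul_one_sub_sqrt_one_sub_sq_mul hκ0 hκ1.le (norm_nonneg p) hTP hPQ h2T,
    inv_mul_one_sub_sqrt_one_sub_sq_lt_one hκ0 hκ1⟩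
end
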